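/- arXiv:2011.06539 — 2 statements merged into one kernel-verified Lean document; each statement's English description precedes it below -/
import Mathlib

section
/- Existence of minimizers for the discretized shared prior learning problem with the explicit Euler scheme: Fix α ∈ [0,1], p ∈ [1,∞), S ∈ ℕ, T_max > 0, compact sets Ξ ⊂ ℝ^{n_Ξ}, Θ ⊂ ℝ^{n_Θ}, linear maps A : ℝ^{n_y} → ℝ^{n_z}, A_init : ℝ^{n_z} → ℝ^{n_y}, a patch extraction operator P : ℝ^{n_y} → ℝ^{N × n_p²}, and a feature extraction operator F : ℝ^{N × n_p²} → ℝ^{N × n_F}. Let D : ℝ^{n_z} × ℝ^{n_z} × Ξ → [0,∞) and R : ℝ^{n_y} × Θ → ℝ be continuously differentiable with compact support. For (z,T,ξ,θ) define the explicit Euler iterates x₀(z) = A_init z and x_{s+1} = x_s − (T/S)(Aᵀ ∇₁D(A x_s, z, ξ) + ∇₁R(x_s, θ)) for s = 0,…,S−1, and write x_S(z,T,ξ,θ) for the terminal iterate. Let μ_Su be a probability measure on ℝ^{n_y} × ℝ^{n_z} and μ_Un a probability measure on ℝ^{n_z} × ℝ^{N × n_p²}, both with finite second moments. Then the infimum over Γ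 = [0,T_max]² × Ξ² × Θ of J(T_Su, T_Un, ξ_Su, ξ_Un, θ) := α ∫ ‖x_S(z̄,T_Su,ξ_Su,θ) − ȳ‖₂ dμ_Su(ȳ,z̄) + (1−α) ∫ W_p(rows of F(P x_S(ẑ,T_Un,ξ_Un,θ)), rows of F(p̂)) dμ_Un(ẑ,p̂) is attained. -/
/-!
The terminal Euler iterate `x_S(z, T, ξ, θ)` is jointly continuous because `∇₁D` and `∇₁R` are.
Gradients of compactly supported `C¹` functions are bounded, say by `K`, so each of the `S` steps
moves the state by at most `(|T|/S)·K` and `x_S` grows at most linearly in `z`, uniformly for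
`|T| ≤ T_max`. The discrete Wasserstein distance is Lipschitz in its two point clouds (raising
every entry of the cost matrix by at most `δ` raises every transport cost by at most `δ`, as a
coupling has total mass at most one) and grows linearly in them. Finite moments of `μ_Su` and
`μ_Un` then let dominated convergence make both integrals in `J` continuous on the compact set `Γ`,
where `J` therefore attains its minimum.
-/

open Finset Set MeasureTheory

noncomputable def lpNormVec (p : ℝ) {k : ℕ} (x : EuclideanSpace ℝ (Fin k)) : ℝ :=
  (∑ i, |x i| ^ p) ^ (1 / p)

/-- Discrete Wasserstein distance between the empirical measures of two
collections of `N` points in `ℝᵏ`, with `ℓᵖ`-norm cost. -/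
noncomputable def discreteWasserstein (p : ℝ) {k N : ℕ}
    (v w : Fin N → EuclideanSpace ℝ (Fin k)) : ℝ :=
  sInf {c : ℝ | ∃ P : Fin N → Fin N → ℝ,
    (∀ i j, 0 ≤ P i j) ∧ (∀ i, ∑ j, P i j = 1 / N) ∧ (∀ j, ∑ i, P i j = 1 / N) ∧
    c = ∑ i, ∑ j, lpNormVec p (v i - w j) * P i j}

section DiscreteTransport

variable {N : ℕ}

def IsUniformCoupling (P : Fin N → Fin N → ℝ) : Prop :=
  (∀ i j, 0 ≤ P i j) ∧ (∀ i, ∑ j, P i j = 1 / N) ∧ (∀ j, ∑ i, P i j = 1 / N)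

def couplingCosts (C : Fin N → Fin N → ℝ) : Set ℝ :=
  {c | ∃ P, IsUniformCoupling P ∧ c = ∑ i, ∑ j, C i j * P i j}

theorem isUniformCoupling_diagonal :
    IsUniformCoupling fun i j : Fin N => if i = j then (1 / N : ℝ) else 0 :=
  ⟨fun i j => by positivity, fun i => by simp, fun j => by simp⟩

theorem IsUniformCoupling.sum_sum_le_one {P : Fin N → Fin N → ℝ} (hP : IsUniformCoupling P) :
    ∑ i, ∑ j, P i j ≤ 1 := by
  simp only [hP.2.1, sum_const, card_univ, Fintype.card_fin, nsmul_eq_mul, mul_one_div]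
  exact div_self_le_one _

theorem couplingCosts_nonempty (C : Fin N → Fin N → ℝ) : (couplingCosts C).Nonempty :=
  ⟨_, _, isUniformCoupling_diagonal, rfl⟩

theorem nonneg_of_mem_couplingCosts {C : Fin N → Fin N → ℝ} (hC : ∀ i j, 0 ≤ C i j) {c : ℝ}
    (hc : c ∈ couplingCosts C) : 0 ≤ c := by
  obtain ⟨P, hP, rfl⟩ := hc
  exact sum_nonneg fun i _ => sum_nonneg fun j _ => mul_nonneg (hC i j) (hP.1 i j)

theorem sInf_couplingCosts_le_cost {C : Fin N → Fin N → ℝ} (hC : ∀ i j, 0 ≤ C i j)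
    {P : Fin N → Fin N → ℝ} (hP : IsUniformCoupling P) :
    sInf (couplingCosts C) ≤ ∑ i, ∑ j, C i j * P i j :=
  csInf_le ⟨0, fun _ => nonneg_of_mem_couplingCosts hC⟩ ⟨P, hP, rfl⟩

theorem sInf_couplingCosts_nonneg {C : Fin N → Fin N → ℝ} (hC : ∀ i j, 0 ≤ C i j) :
    0 ≤ sInf (couplingCosts C) :=
  Real.sInf_nonneg fun _ => nonneg_of_mem_couplingCosts hC

theorem sInf_couplingCosts_le_add {C C' : Fin N → Fin N → ℝ} {δ : ℝ} (hC : ∀ i j, 0 ≤ C i j)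
    (hδ : 0 ≤ δ) (h : ∀ i j, C i j ≤ C' i j + δ) :
    sInf (couplingCosts C) ≤ sInf (couplingCosts C') + δ := by
  rw [← sub_le_iff_le_add]
  refine le_csInf (couplingCosts_nonempty C') ?_
  rintro c ⟨P, hP, rfl⟩
  rw [sub_le_iff_le_add]
  calc sInf (couplingCosts C) ≤ ∑ i, ∑ j, C i j * P i j := sInf_couplingCosts_le_cost hC hP
    _ ≤ ∑ i, ∑ j, (C' i j + δ) * P i j := by gcongr with i _ j _; exacts [hP.1 i j, h i j]
    _ = ∑ i, ∑ j, C' i j * P i j + δ * ∑ i, ∑ j, P i j := by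
        simp only [add_mul, sum_add_distrib, mul_sum]
    _ ≤ ∑ i, ∑ j, C' i j * P i j + δ := by
        gcongr; exact mul_le_of_le_one_right hδ hP.sum_sum_le_one

theorem sInf_couplingCosts_le {C : Fin N → Fin N → ℝ} {M : ℝ} (hC : ∀ i j, 0 ≤ C i j)
    (hM : 0 ≤ M) (h : ∀ i j, C i j ≤ M) : sInf (couplingCosts C) ≤ M := by
  have hzero : sInf (couplingCosts fun _ _ : Fin N => (0 : ℝ)) ≤ 0 := by
    simpa using sInf_couplingCosts_le_cost (fun _ _ => le_rfl) (isUniformCoupling_diagonal (N := N))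
  linarith [sInf_couplingCosts_le_add hC hM (C' := fun _ _ => 0) (by simpa using h)]

end DiscreteTransport

section LpNorm

variable {p : ℝ} {k : ℕ}

theorem lpNormVec_nonneg (x : EuclideanSpace ℝ (Fin k)) : 0 ≤ lpNormVec p x := by
  unfold lpNormVec; positivity

theorem lpNormVec_add_le (hp : 1 ≤ p) (x y : EuclideanSpace ℝ (Fin k)) :
    lpNormVec p (x + y) ≤ lpNormVec p x + lpNormVec p y := by
  simpa [lpNormVec] using Real.Lp_add_le univ (fun i => x i) (fun i => y i) hp

theorem lpNormVec_le_mul_norm (hp : 0 < p) (x : EuclideanSpace ℝ (Fin k)) :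
    lpNormVec p x ≤ (k : ℝ) ^ (1 / p) * ‖x‖ := by
  calc lpNormVec p x ≤ (∑ _i : Fin k, ‖x‖ ^ p) ^ (1 / p) := by
        unfold lpNormVec; gcongr with i _; simpa using PiLp.norm_apply_le x i
    _ = (k : ℝ) ^ (1 / p) * ‖x‖ := by
        rw [sum_const, card_univ, Fintype.card_fin, nsmul_eq_mul,
          Real.mul_rpow (by positivity) (by positivity), one_div,
          Real.rpow_rpow_inv (norm_nonneg x) hp.ne']

theorem lpNormVec_sub_le_add (hp : 1 ≤ p) (u v u' v' : EuclideanSpace ℝ (Fin k)) :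
    lpNormVec p (u - v) ≤ lpNormVec p (u' - v') + lpNormVec p (u - u') + lpNormVec p (v' - v) := by
  have h₁ := lpNormVec_add_le hp (u' - v' + (u - u')) (v' - v)
  have h₂ := lpNormVec_add_le hp (u' - v') (u - u')
  rw [show u' - v' + (u - u') + (v' - v) = u - v by abel] at h₁
  linarith

end LpNorm

section Wasserstein

variable {p : ℝ} {k N : ℕ}

theorem discreteWasserstein_eq_sInf_couplingCosts (v w : Fin N → EuclideanSpace ℝ (Fin k)) :
    discreteWasserstein p v w = sInf (couplingCosts fun i j => lpNormVec p (v i - w j)) := by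
  simp only [discreteWasserstein, couplingCosts, IsUniformCoupling, and_assoc]

theorem discreteWasserstein_nonneg (v w : Fin N → EuclideanSpace ℝ (Fin k)) :
    0 ≤ discreteWasserstein p v w := by
  rw [discreteWasserstein_eq_sInf_couplingCosts]
  exact sInf_couplingCosts_nonneg fun _ _ => lpNormVec_nonneg _

theorem discreteWasserstein_le_add_dist (hp : 1 ≤ p)
    (x y : (Fin N → EuclideanSpace ℝ (Fin k)) × (Fin N → EuclideanSpace ℝ (Fin k))) :
    discreteWasserstein p x.1 x.2 ≤
      discreteWasserstein p y.1 y.2 + 2 * k ^ (1 / p) * dist x y := by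
  have hpoint : ∀ (u u' : Fin N → EuclideanSpace ℝ (Fin k)) i, dist u u' ≤ dist x y →
      lpNormVec p (u i - u' i) ≤ k ^ (1 / p) * dist x y := fun u u' i h =>
    (lpNormVec_le_mul_norm (by linarith) _).trans <| by
      rw [← dist_eq_norm]; gcongr; exact (dist_le_pi_dist u u' i).trans h
  simp only [discreteWasserstein_eq_sInf_couplingCosts]
  refine sInf_couplingCosts_le_add (fun _ _ => lpNormVec_nonneg _) (by positivity) fun i j => ?_
  linarith [lpNormVec_sub_le_add hp (x.1 i) (x.2 j) (y.1 i) (y.2 j),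
    hpoint x.1 y.1 i (le_max_left _ _),
    hpoint y.2 x.2 j ((dist_comm _ _).trans_le (le_max_right _ _))]

theorem continuous_discreteWasserstein (hp : 1 ≤ p) :
    Continuous fun x : (Fin N → EuclideanSpace ℝ (Fin k)) × (Fin N → EuclideanSpace ℝ (Fin k)) =>
      discreteWasserstein p x.1 x.2 :=
  (LipschitzWith.of_le_add_mul' _ (discreteWasserstein_le_add_dist hp)).continuous

theorem discreteWasserstein_le (hp : 1 ≤ p) (v w : Fin N → EuclideanSpace ℝ (Fin k)) :
    discreteWasserstein p v w ≤ k ^ (1 / p) * (‖v‖ + ‖w‖) := by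
  rw [discreteWasserstein_eq_sInf_couplingCosts]
  refine sInf_couplingCosts_le (fun _ _ => lpNormVec_nonneg _) (by positivity) fun i j => ?_
  refine (lpNormVec_le_mul_norm (by linarith) _).trans ?_
  gcongr
  exact (norm_sub_le _ _).trans (add_le_add (norm_le_pi_norm v i) (norm_le_pi_norm w j))

end Wasserstein

section PartialGradient

variable {E F : Type*} [NormedAddCommGroup E] [InnerProductSpace ℝ E] [CompleteSpace E]
  [NormedAddCommGroup F] [NormedSpace ℝ F] {f : E × F → ℝ}

theorem gradient_partial_fst_eq (hf : ContDiff ℝ 1 f) (x : E) (y : F) :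
    gradient (fun u => f (u, y)) x =
      (InnerProductSpace.toDual ℝ E).symm ((fderiv ℝ f (x, y)).comp (.inl ℝ E F)) := by
  rw [gradient]
  exact congrArg _ ((hf.differentiable one_ne_zero (x, y)).hasFDerivAt.comp x
    (hasFDerivAt_prodMk_left x y)).fderiv

theorem continuous_gradient_partial_fst (hf : ContDiff ℝ 1 f) :
    Continuous fun q : E × F => gradient (fun u => f (u, q.2)) q.1 := by
  simp only [gradient_partial_fst_eq hf]
  exact (InnerProductSpace.toDual ℝ E).symm.continuous.comp
    ((hf.continuous_fderiv one_ne_zero).clm_comp continuous_const)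

theorem exists_norm_gradient_partial_fst_le (hf : ContDiff ℝ 1 f) (hsupp : HasCompactSupport f) :
    ∃ C, ∀ x y, ‖gradient (fun u => f (u, y)) x‖ ≤ C := by
  obtain ⟨C, hC⟩ := (hf.continuous_fderiv one_ne_zero).bounded_above_of_compact_support
    (hsupp.fderiv (𝕜 := ℝ))
  refine ⟨C, fun x y => ?_⟩
  rw [gradient_partial_fst_eq hf, LinearIsometryEquiv.norm_map]
  calc ‖(fderiv ℝ f (x, y)).comp (.inl ℝ E F)‖
      ≤ ‖fderiv ℝ f (x, y)‖ * ‖ContinuousLinearMap.inl ℝ E F‖ :=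
        ContinuousLinearMap.opNorm_comp_le _ _
    _ ≤ ‖fderiv ℝ f (x, y)‖ :=
        mul_le_of_le_one_right (norm_nonneg (fderiv ℝ f (x, y)))
          (ContinuousLinearMap.norm_inl_le_one ℝ E F)
    _ ≤ C := hC (x, y)

end PartialGradient

section ParametricIntegral

variable {X Ω : Type*} [TopologicalSpace X] [FirstCountableTopology X]
  [NormedAddCommGroup Ω] [MeasurableSpace Ω] [OpensMeasurableSpace Ω] {μ : Measure Ω}

theorem integrable_norm_of_integrable_norm_sq [IsFiniteMeasure μ]
    (h : Integrable (fun ω => ‖ω‖ ^ 2) μ) : Integrable (fun ω => ‖ω‖) μ :=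
  ((integrable_const 1).add h).mono' continuous_norm.aestronglyMeasurable <| .of_forall fun ω => by
    rw [norm_norm, Pi.add_apply]; nlinarith [sq_nonneg (‖ω‖ - 1)]

theorem continuousOn_integral_of_le_add_mul_norm [IsFiniteMeasure μ] {f : X → Ω → ℝ}
    (hf : Continuous (Function.uncurry f)) {s : Set X} {a b : ℝ}
    (hbound : ∀ x ∈ s, ∀ ω, |f x ω| ≤ a + b * ‖ω‖) (hμ : Integrable (fun ω => ‖ω‖) μ) :
    ContinuousOn (fun x => ∫ ω, f x ω ∂μ) s :=
  continuousOn_of_dominated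
    (fun x _ => (hf.comp (Continuous.prodMk_right x)).aestronglyMeasurable)
    (fun x hx => .of_forall (hbound x hx)) ((integrable_const a).add (hμ.const_mul b))
    (.of_forall fun ω => (hf.comp (Continuous.prodMk_left ω)).continuousOn)

end ParametricIntegral

section ExplicitEuler

theorem dist_iterate_le_mul {α : Type*} [PseudoMetricSpace α] {f : α → α} {c : ℝ}
    (h : ∀ x, dist (f x) x ≤ c) (x : α) (n : ℕ) : dist (f^[n] x) x ≤ n * c := by
  induction n with
  | zero => simp
  | succ n ih =>
    rw [Function.iterate_succ_apply', Nat.cast_succ, add_mul, one_mul, add_comm]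
    exact (dist_triangle _ _ _).trans (add_le_add (h _) ih)

theorem Continuous.iterate_uncurry {X Y : Type*} [TopologicalSpace X] [TopologicalSpace Y]
    {f : X → Y → Y} (hf : Continuous (Function.uncurry f)) (n : ℕ) :
    Continuous fun q : X × Y => (f q.1)^[n] q.2 := by
  induction n with
  | zero => exact continuous_snd
  | succ n ih =>
    simp only [Function.iterate_succ_apply']
    exact hf.comp (continuous_fst.prodMk ih)

theorem norm_euler_iterate_sub_le {E : Type*} [SeminormedAddCommGroup E] [NormedSpace ℝ E]
    {g : E → E} {K : ℝ} (hg : ∀ x, ‖g x‖ ≤ K) (T : ℝ) (n : ℕ) (x : E) :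
    ‖(fun y => y - (T / n) • g y)^[n] x - x‖ ≤ |T| * K := by
  have hK : 0 ≤ K := (norm_nonneg _).trans (hg x)
  have hstep : ∀ y, dist (y - (T / n) • g y) y ≤ |T / n| * K := fun y => by
    rw [dist_eq_norm, sub_sub_cancel_left, norm_neg, norm_smul, Real.norm_eq_abs]
    gcongr; exact hg y
  have htime : (n : ℝ) * |T / n| ≤ |T| := by
    rcases n.eq_zero_or_pos with rfl | hn
    · simp
    · rw [abs_div, Nat.abs_cast, mul_div_cancel₀ _ (by positivity)]
  rw [← dist_eq_norm]
  calc _ ≤ n * (|T / n| * K) := dist_iterate_le_mul hstep x n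
    _ ≤ |T| * K := by rw [← mul_assoc]; gcongr

end ExplicitEuler

section SharedPriorEnergy

variable {E Z Ξ Θ : Type*} [NormedAddCommGroup E] [InnerProductSpace ℝ E] [CompleteSpace E]
  [NormedAddCommGroup Z] [InnerProductSpace ℝ Z] [CompleteSpace Z]
  [NormedAddCommGroup Ξ] [NormedSpace ℝ Ξ] [NormedAddCommGroup Θ] [NormedSpace ℝ Θ]
  (A : E →L[ℝ] Z) {D : Z × Z × Ξ → ℝ} {R : E × Θ → ℝ}

/-- The gradient in `x` of the energy `D(Ax, z, ξ) + R(x, θ)`. -/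
noncomputable def energyGradient (D : Z × Z × Ξ → ℝ) (R : E × Θ → ℝ) (z : Z) (ξ : Ξ) (θ : Θ)
    (x : E) : E :=
  ContinuousLinearMap.adjoint A (gradient (fun u => D (u, z, ξ)) (A x)) +
    gradient (fun u => R (u, θ)) x

theorem exists_norm_energyGradient_le (hD : ContDiff ℝ 1 D) (hDsupp : HasCompactSupport D)
    (hR : ContDiff ℝ 1 R) (hRsupp : HasCompactSupport R) :
    ∃ K, ∀ z ξ θ x, ‖energyGradient A D R z ξ θ x‖ ≤ K := by
  obtain ⟨CD, hCD⟩ := exists_norm_gradient_partial_fst_le hD hDsupp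
  obtain ⟨CR, hCR⟩ := exists_norm_gradient_partial_fst_le hR hRsupp
  refine ⟨‖ContinuousLinearMap.adjoint A‖ * CD + CR, fun z ξ θ x => ?_⟩
  refine (norm_add_le _ _).trans (add_le_add ?_ (hCR x θ))
  exact (ContinuousLinearMap.le_opNorm _ _).trans (by gcongr; exact hCD (A x) (z, ξ))

theorem exists_norm_euler_iterate_energyGradient_le (hD : ContDiff ℝ 1 D)
    (hDsupp : HasCompactSupport D) (hR : ContDiff ℝ 1 R) (hRsupp : HasCompactSupport R) :
    ∃ K, 0 ≤ K ∧ ∀ (n : ℕ) z (T : ℝ) ξ θ (x₀ : E),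
      ‖(fun x => x - (T / n) • energyGradient A D R z ξ θ x)^[n] x₀‖ ≤ ‖x₀‖ + |T| * K := by
  obtain ⟨K, hK⟩ := exists_norm_energyGradient_le A hD hDsupp hR hRsupp
  refine ⟨K, (norm_nonneg _).trans (hK 0 0 0 0), fun n z T ξ θ x₀ => ?_⟩
  exact (norm_le_insert' _ _).trans (by gcongr; exact norm_euler_iterate_sub_le (hK z ξ θ) T n x₀)

theorem continuous_euler_iterate_energyGradient (hD : ContDiff ℝ 1 D) (hR : ContDiff ℝ 1 R)
    (n : ℕ) {x₀ : Z → E} (hx₀ : Continuous x₀) :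
    Continuous fun w : Z × ℝ × Ξ × Θ =>
      (fun x => x - (w.2.1 / n) • energyGradient A D R w.1 w.2.2.1 w.2.2.2 x)^[n] (x₀ w.1) := by
  have hgrad : Continuous fun q : (Z × ℝ × Ξ × Θ) × E =>
      energyGradient A D R q.1.1 q.1.2.2.1 q.1.2.2.2 q.2 :=
    ((ContinuousLinearMap.adjoint A).continuous.comp ((continuous_gradient_partial_fst hD).comp
      ((A.continuous.comp continuous_snd).prodMk (continuous_fst.fst.prodMk
        continuous_fst.snd.snd.fst)))).add
    ((continuous_gradient_partial_fst hR).comp (continuous_snd.prodMk continuous_fst.snd.snd.snd))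
  have hstep : Continuous (Function.uncurry fun (w : Z × ℝ × Ξ × Θ) (x : E) =>
      x - (w.2.1 / n) • energyGradient A D R w.1 w.2.2.1 w.2.2.2 x) :=
    continuous_snd.sub ((continuous_fst.snd.fst.div_const _).smul hgrad)
  exact (hstep.iterate_uncurry n).comp (continuous_id.prodMk (hx₀.comp continuous_fst))

end SharedPriorEnergy

section ParametricLoss

variable {X Y Z : Type*} [TopologicalSpace X] [FirstCountableTopology X]
  [NormedAddCommGroup Y] [MeasurableSpace Y] [NormedAddCommGroup Z] [MeasurableSpace Z]
  {s : Set X} {a b : ℝ}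

theorem continuousOn_integral_norm_sub [OpensMeasurableSpace (Y × Z)]
    {μ : Measure (Y × Z)} [IsFiniteMeasure μ]
    (hμ : Integrable (fun q => ‖q‖) μ) {g : X → Z → Y} (hg : Continuous (Function.uncurry g))
    (hb : 0 ≤ b) (hgrowth : ∀ x ∈ s, ∀ z, ‖g x z‖ ≤ a + b * ‖z‖) :
    ContinuousOn (fun x => ∫ q, ‖g x q.2 - q.1‖ ∂μ) s := by
  refine continuousOn_integral_of_le_add_mul_norm (a := a) (b := b + 1) (by fun_prop)
    (fun x hx q => ?_) hμ
  rw [abs_norm]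
  calc ‖g x q.2 - q.1‖ ≤ a + b * ‖q.2‖ + ‖q.1‖ :=
        (norm_sub_le _ _).trans (add_le_add_left (hgrowth x hx q.2) _)
    _ ≤ a + (b + 1) * ‖q‖ := by nlinarith [norm_fst_le q, norm_snd_le q]

theorem continuousOn_integral_discreteWasserstein [NormedSpace ℝ Y]
    [OpensMeasurableSpace (Z × Y)] {μ : Measure (Z × Y)} [IsFiniteMeasure μ]
    (hμ : Integrable (fun q => ‖q‖) μ) {p : ℝ} (hp : 1 ≤ p) {k N : ℕ}
    {g : X → Z → Fin N → EuclideanSpace ℝ (Fin k)} (hg : Continuous (Function.uncurry g))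
    (hb : 0 ≤ b) (hgrowth : ∀ x ∈ s, ∀ z, ‖g x z‖ ≤ a + b * ‖z‖)
    (L : Y →L[ℝ] Fin N → EuclideanSpace ℝ (Fin k)) :
    ContinuousOn (fun x => ∫ q, discreteWasserstein p (g x q.1) (L q.2) ∂μ) s := by
  set c : ℝ := (k : ℝ) ^ (1 / p)
  have hcont : Continuous fun w : X × Z × Y => discreteWasserstein p (g w.1 w.2.1) (L w.2.2) :=
    (continuous_discreteWasserstein hp).comp (f := fun w : X × Z × Y => (g w.1 w.2.1, L w.2.2))
      (by fun_prop)
  have hbound : ∀ x ∈ s, ∀ q : Z × Y,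
      |discreteWasserstein p (g x q.1) (L q.2)| ≤ c * a + c * (b + ‖L‖) * ‖q‖ := by
    intro x hx q
    rw [abs_of_nonneg (discreteWasserstein_nonneg _ _)]
    have hL : ‖L q.2‖ ≤ ‖L‖ * ‖q‖ := (L.le_opNorm _).trans (by gcongr; exact norm_snd_le q)
    have hgq : ‖g x q.1‖ ≤ a + b * ‖q‖ :=
      (hgrowth x hx q.1).trans (by gcongr; exact norm_fst_le q)
    calc discreteWasserstein p (g x q.1) (L q.2) ≤ c * (‖g x q.1‖ + ‖L q.2‖) :=
          discreteWasserstein_le hp _ _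
      _ ≤ c * a + c * (b + ‖L‖) * ‖q‖ := by
          have : 0 ≤ c := by positivity
          nlinarith
  exact continuousOn_integral_of_le_add_mul_norm hcont hbound hμ

end ParametricLoss

theorem discretized_shared_prior_learning_exists_minimizer_explicit_euler_general
    (ny nz nΞ nΘ N np2 nF : ℕ) (S : ℕ)
    (α : ℝ) (p : ℝ) (hp : 1 ≤ p)
    (Tmax : ℝ) (hT : 0 < Tmax)
    (Ξ : Set (EuclideanSpace ℝ (Fin nΞ))) (hΞ : IsCompact Ξ) (hΞne : Ξ.Nonempty)
    (Θ : Set (EuclideanSpace ℝ (Fin nΘ))) (hΘ : IsCompact Θ) (hΘne : Θ.Nonempty)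
    (A : EuclideanSpace ℝ (Fin ny) →L[ℝ] EuclideanSpace ℝ (Fin nz))
    (Ainit : EuclideanSpace ℝ (Fin nz) →ₗ[ℝ] EuclideanSpace ℝ (Fin ny))
    (P : EuclideanSpace ℝ (Fin ny) →ₗ[ℝ] (Fin N → EuclideanSpace ℝ (Fin np2)))
    (F : (Fin N → EuclideanSpace ℝ (Fin np2)) →ₗ[ℝ] (Fin N → EuclideanSpace ℝ (Fin nF)))
    (D : EuclideanSpace ℝ (Fin nz) × EuclideanSpace ℝ (Fin nz) ×
        EuclideanSpace ℝ (Fin nΞ) → ℝ)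
    (hD : ContDiff ℝ 1 D) (hDsupp : HasCompactSupport D)
    (R : EuclideanSpace ℝ (Fin ny) × EuclideanSpace ℝ (Fin nΘ) → ℝ)
    (hR : ContDiff ℝ 1 R) (hRsupp : HasCompactSupport R)
    (xS : EuclideanSpace ℝ (Fin nz) → ℝ → EuclideanSpace ℝ (Fin nΞ) →
        EuclideanSpace ℝ (Fin nΘ) → EuclideanSpace ℝ (Fin ny))
    (hxS : ∀ z T ξ θ, xS z T ξ θ =
      (fun x : EuclideanSpace ℝ (Fin ny) => x - (T / S) •
          ((ContinuousLinearMap.adjoint A) (gradient (fun u => D (u, z, ξ)) (A x)) +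
            gradient (fun u => R (u, θ)) x))^[S] (Ainit z))
    (μSu : Measure (EuclideanSpace ℝ (Fin ny) × EuclideanSpace ℝ (Fin nz)))
    [IsProbabilityMeasure μSu] (hmomSu : Integrable (fun q => ‖q‖ ^ 2) μSu)
    (μUn : Measure (EuclideanSpace ℝ (Fin nz) × (Fin N → EuclideanSpace ℝ (Fin np2))))
    [IsProbabilityMeasure μUn] (hmomUn : Integrable (fun q => ‖q‖ ^ 2) μUn)
    (J : ℝ × ℝ × EuclideanSpace ℝ (Fin nΞ) × EuclideanSpace ℝ (Fin nΞ) ×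
        EuclideanSpace ℝ (Fin nΘ) → ℝ)
    (hJ : ∀ TSu TUn ξSu ξUn θ, J (TSu, TUn, ξSu, ξUn, θ) =
      α * (∫ q, ‖xS q.2 TSu ξSu θ - q.1‖ ∂μSu) +
        (1 - α) * (∫ q, discreteWasserstein p (F (P (xS q.1 TUn ξUn θ))) (F q.2) ∂μUn)) :
    ∃ γ ∈ (Icc (0:ℝ) Tmax ×ˢ Icc (0:ℝ) Tmax ×ˢ Ξ ×ˢ Ξ ×ˢ Θ),
      ∀ γ' ∈ (Icc (0:ℝ) Tmax ×ˢ Icc (0:ℝ) Tmax ×ˢ Ξ ×ˢ Ξ ×ˢ Θ), J γ ≤ J γ' := by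
  set Γ := Icc (0:ℝ) Tmax ×ˢ Icc (0:ℝ) Tmax ×ˢ Ξ ×ˢ Ξ ×ˢ Θ
  set A₀ := LinearMap.toContinuousLinearMap Ainit
  set FP := LinearMap.toContinuousLinearMap (F ∘ₗ P)
  obtain ⟨K, hK₀, hK⟩ := exists_norm_euler_iterate_energyGradient_le A hD hDsupp hR hRsupp
  have hxS_cont : Continuous fun w : _ × ℝ × _ × _ => xS w.1 w.2.1 w.2.2.1 w.2.2.2 := by
    simp only [hxS]; exact continuous_euler_iterate_energyGradient A hD hR S A₀.continuous
  have hxS_le : ∀ z, ∀ T ∈ Icc 0 Tmax, ∀ ξ θ, ‖xS z T ξ θ‖ ≤ Tmax * K + ‖A₀‖ * ‖z‖ := by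
    intro z T hTmem ξ θ
    rw [hxS, add_comm]
    refine (hK S z T ξ θ (Ainit z)).trans (add_le_add (A₀.le_opNorm z) ?_)
    gcongr; exact (abs_of_nonneg hTmem.1).trans_le hTmem.2
  have hSu := continuousOn_integral_norm_sub (integrable_norm_of_integrable_norm_sq hmomSu)
    (g := fun (γ : ℝ × ℝ × _ × _ × _) z => xS z γ.1 γ.2.2.1 γ.2.2.2.2) (s := Γ) (by fun_prop)
    (norm_nonneg _) fun γ hγ z => hxS_le z _ hγ.1 _ _
  have hUn := continuousOn_integral_discreteWasserstein
    (integrable_norm_of_integrable_norm_sq hmomUn) hp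
    (g := fun (γ : ℝ × ℝ × _ × _ × _) z => FP (xS z γ.2.1 γ.2.2.2.1 γ.2.2.2.2)) (s := Γ)
    (a := ‖FP‖ * (Tmax * K)) (b := ‖FP‖ * ‖A₀‖) (by fun_prop) (by positivity)
    (fun γ hγ z => (FP.le_opNorm _).trans <| by
      rw [mul_assoc, ← mul_add]; gcongr; exact hxS_le z _ hγ.2.1 _ _)
    (LinearMap.toContinuousLinearMap F)
  have hJ_cont : ContinuousOn J Γ :=
    ((continuousOn_const.mul hSu).add (continuousOn_const.mul hUn)).congr
      fun ⟨TSu, TUn, ξSu, ξUn, θ⟩ _ => hJ TSu TUn ξSu ξUn θ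
  have hΓ : IsCompact Γ := isCompact_Icc.prod (isCompact_Icc.prod (hΞ.prod (hΞ.prod hΘ)))
  have hΓne : Γ.Nonempty := (Set.nonempty_Icc.2 hT.le).prod
    ((Set.nonempty_Icc.2 hT.le).prod (hΞne.prod (hΞne.prod hΘne)))
  obtain ⟨γ, hγ, hmin⟩ := hΓ.exists_isMinOn hΓne hJ_cont
  exact ⟨γ, hγ, fun γ' hγ' => hmin hγ'⟩

/-- Existence of minimizers for the discretized shared prior learning problem
with the explicit forward Euler scheme: the cost functional built from the
terminal iterate `x_S` of the `S`-step explicit Euler discretization of the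
gradient flow attains its infimum over `Γ = [0,T_max]² × Ξ² × Θ`. -/
theorem discretized_shared_prior_learning_exists_minimizer_explicit_euler
    (ny nz nΞ nΘ N np2 nF : ℕ) (S : ℕ) (hS : 0 < S)
    (α : ℝ) (hα : α ∈ Icc (0:ℝ) 1) (p : ℝ) (hp : 1 ≤ p)
    (Tmax : ℝ) (hT : 0 < Tmax)
    (Ξ : Set (EuclideanSpace ℝ (Fin nΞ))) (hΞ : IsCompact Ξ) (hΞne : Ξ.Nonempty)
    (Θ : Set (EuclideanSpace ℝ (Fin nΘ))) (hΘ : IsCompact Θ) (hΘne : Θ.Nonempty)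
    (A : EuclideanSpace ℝ (Fin ny) →L[ℝ] EuclideanSpace ℝ (Fin nz))
    (Ainit : EuclideanSpace ℝ (Fin nz) →ₗ[ℝ] EuclideanSpace ℝ (Fin ny))
    (P : EuclideanSpace ℝ (Fin ny) →ₗ[ℝ] (Fin N → EuclideanSpace ℝ (Fin np2)))
    (F : (Fin N → EuclideanSpace ℝ (Fin np2)) →ₗ[ℝ] (Fin N → EuclideanSpace ℝ (Fin nF)))
    (D : EuclideanSpace ℝ (Fin nz) × EuclideanSpace ℝ (Fin nz) ×
        EuclideanSpace ℝ (Fin nΞ) → ℝ)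
    (hD : ContDiff ℝ 1 D) (hDsupp : HasCompactSupport D) (hDpos : ∀ q, 0 ≤ D q)
    (R : EuclideanSpace ℝ (Fin ny) × EuclideanSpace ℝ (Fin nΘ) → ℝ)
    (hR : ContDiff ℝ 1 R) (hRsupp : HasCompactSupport R)
    (xS : EuclideanSpace ℝ (Fin nz) → ℝ → EuclideanSpace ℝ (Fin nΞ) →
        EuclideanSpace ℝ (Fin nΘ) → EuclideanSpace ℝ (Fin ny))
    (hxS : ∀ z T ξ θ, xS z T ξ θ =
      (fun x : EuclideanSpace ℝ (Fin ny) => x - (T / S) •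
          ((ContinuousLinearMap.adjoint A) (gradient (fun u => D (u, z, ξ)) (A x)) +
            gradient (fun u => R (u, θ)) x))^[S] (Ainit z))
    (μSu : Measure (EuclideanSpace ℝ (Fin ny) × EuclideanSpace ℝ (Fin nz)))
    [IsProbabilityMeasure μSu] (hmomSu : Integrable (fun q => ‖q‖ ^ 2) μSu)
    (μUn : Measure (EuclideanSpace ℝ (Fin nz) × (Fin N → EuclideanSpace ℝ (Fin np2))))
    [IsProbabilityMeasure μUn] (hmomUn : Integrable (fun q => ‖q‖ ^ 2) μUn)
    (J : ℝ × ℝ × EuclideanSpace ℝ (Fin nΞ) × EuclideanSpace ℝ (Fin nΞ) ×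
        EuclideanSpace ℝ (Fin nΘ) → ℝ)
    (hJ : ∀ TSu TUn ξSu ξUn θ, J (TSu, TUn, ξSu, ξUn, θ) =
      α * (∫ q, ‖xS q.2 TSu ξSu θ - q.1‖ ∂μSu) +
        (1 - α) * (∫ q, discreteWasserstein p (F (P (xS q.1 TUn ξUn θ))) (F q.2) ∂μUn)) :
    ∃ γ ∈ (Icc (0:ℝ) Tmax ×ˢ Icc (0:ℝ) Tmax ×ˢ Ξ ×ˢ Ξ ×ˢ Θ),
      ∀ γ' ∈ (Icc (0:ℝ) Tmax ×ˢ Icc (0:ℝ) Tmax ×ˢ Ξ ×ˢ Ξ ×ˢ Θ), J γ ≤ J γ' :=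
  discretized_shared_prior_learning_exists_minimizer_explicit_euler_general ny nz nΞ nΘ N np2 nF S α
    p hp Tmax hT Ξ hΞ hΞne Θ hΘ hΘne A Ainit P F D hD hDsupp R hR hRsupp xS hxS μSu hmomSu μUn
    hmomUn J hJ
end

section
/- Convergence of affine interpolants of explicit Euler trajectories with converging parameters: let f : ℝ^n × ℝ^d → ℝ^n be continuously differentiable with compact support, let p^S → p in ℝ^d, and fix x₀ ∈ ℝ^n. Let X : [0,1] → ℝ^n be the unique solution of X'(t) = f(X(t), p) with X(0) = x₀, and for each S ∈ ℕ define the Euler iterates x^S_0 = x₀, x^S_{s+1} = x^S_s + (1/S) f(x^S_s, p^S) for s = 0,…,S−1, together with the piecewise affine interpolation I^S : [0,1] → ℝ^n defined by I^S(t) = (s+1−St) x^S_s + (St−s) x^S_{s+1} for t ∈ [s/S, (s+1)/S). Then ∫₀¹ ‖I^S(t) − X(t)‖₂² dt → 0 as S → ∞, and moreover max_{0 ≤ s ≤ S} ‖x^S_s − X(s/S)‖₂ → 0. -/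
/-!
Let `K` be a Lipschitz constant of `f` and `M` a bound of `‖f‖`, hence a Lipschitz constant
of `X`. The mean value inequality for `t ↦ X t - t • f (x_s, q)` on `[s/S, (s+1)/S]` shows
that the node errors `e_s = ‖x_s - X (s/S)‖` satisfy
`e_{s+1} ≤ (1 + K/S) e_s + (K/S) (‖q - p‖ + M/S)`, and the discrete Grönwall inequality turns
this into the uniform bound `e_s ≤ K (‖q - p‖ + M/S) exp K`, which tends to `0` as
`q = p^S → p`. The interpolant at `t` is a convex combination of two nodes within `1/S` of `t`,
so it stays within `e + M/S` of `X t`; the square of this uniform bound bounds the `L²` error.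
-/

open Set Filter intervalIntegral

/-- Explicit Euler iterates `x₀, x₁, …` for the parametrized vector field
`x ↦ f (x, q)` with step size `1/S`. -/
noncomputable def eulerIter {E F : Type*} [NormedAddCommGroup E] [NormedSpace ℝ E]
    (f : E × F → E) (x₀ : E) (S : ℕ) (q : F) : ℕ → E :=
  fun s => (fun x => x + (1 / (S : ℝ)) • f (x, q))^[s] x₀

/-- Piecewise affine interpolation of a sequence `y` at the nodes `s/S`:
`I(t) = (s+1−St) y_s + (St−s) y_{s+1}` for `t ∈ [s/S, (s+1)/S)`. -/
noncomputable def affineInterp {E : Type*} [AddCommGroup E] [Module ℝ E]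
    (S : ℕ) (y : ℕ → E) (t : ℝ) : E :=
  ((⌊(S : ℝ) * t⌋₊ : ℝ) + 1 - S * t) • y ⌊(S : ℝ) * t⌋₊ +
    ((S : ℝ) * t - (⌊(S : ℝ) * t⌋₊ : ℝ)) • y (⌊(S : ℝ) * t⌋₊ + 1)

open scoped NNReal Topology

section AffineInterp

variable {E : Type*} [AddCommGroup E] [Module ℝ E]

theorem affineInterp_one (S : ℕ) (y : ℕ → E) : affineInterp S y 1 = y S := by
  simp [affineInterp]

theorem affineInterp_mem_segment (S : ℕ) (y : ℕ → E) {t : ℝ} (ht : 0 ≤ t) :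
    affineInterp S y t ∈
      segment ℝ (y ⌊(S : ℝ) * t⌋₊) (y (⌊(S : ℝ) * t⌋₊ + 1)) := by
  have h₀ := Nat.floor_le (mul_nonneg S.cast_nonneg ht)
  have h₁ := Nat.lt_floor_add_one ((S : ℝ) * t)
  exact ⟨_, _, by linarith, by linarith, by ring, rfl⟩

end AffineInterp

section Interpolation

variable {E : Type*} [NormedAddCommGroup E] [NormedSpace ℝ E]
  {y : ℕ → E} {X : ℝ → E} {S : ℕ} {ε : ℝ} {M : ℝ≥0}

theorem norm_affineInterp_sub_le (hS : S ≠ 0) (hnode : ∀ s ≤ S, ‖y s - X (s / S)‖ ≤ ε)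
    (hX : LipschitzOnWith M X (Icc 0 1)) {t : ℝ} (ht : t ∈ Icc (0 : ℝ) 1) :
    ‖affineInterp S y t - X t‖ ≤ ε + M / S := by
  have hSpos : (0 : ℝ) < S := by positivity
  have hnear : ∀ s ≤ S, |(s : ℝ) - S * t| ≤ 1 → ‖y s - X t‖ ≤ ε + M / S := by
    intro s hs hst
    have hsI : (s : ℝ) / S ∈ Icc (0 : ℝ) 1 :=
      ⟨by positivity, div_le_one_of_le₀ (by exact_mod_cast hs) hSpos.le⟩
    have hdist : |(s : ℝ) / S - t| ≤ 1 / S := by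
      rw [show (s : ℝ) / S - t = (s - S * t) / S by field_simp, abs_div, abs_of_pos hSpos]
      gcongr
    calc ‖y s - X t‖ ≤ ‖y s - X (s / S)‖ + ‖X (s / S) - X t‖ :=
          norm_sub_le_norm_sub_add_norm_sub _ _ _
      _ ≤ ε + M * |(s : ℝ) / S - t| := add_le_add (hnode s hs) (hX.norm_sub_le hsI ht)
      _ ≤ ε + M / S := by grw [hdist, mul_one_div]
  rcases ht.2.eq_or_lt with rfl | ht1
  · rw [affineInterp_one]
    exact hnear S le_rfl (by simp)
  · set s := ⌊(S : ℝ) * t⌋₊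
    have h₀ : (s : ℝ) ≤ S * t := Nat.floor_le (mul_nonneg hSpos.le ht.1)
    have h₁ : (S : ℝ) * t < s + 1 := Nat.lt_floor_add_one _
    have hsS : s < S := (Nat.floor_lt (mul_nonneg hSpos.le ht.1)).2 (by nlinarith)
    rw [← mem_closedBall_iff_norm]
    refine (convex_closedBall _ _).segment_subset ?_ ?_ (affineInterp_mem_segment S y ht.1)
    · refine mem_closedBall_iff_norm.2 (hnear s hsS.le ?_)
      rw [abs_le]; constructor <;> linarith
    · refine mem_closedBall_iff_norm.2 (hnear (s + 1) hsS ?_)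
      rw [abs_le]; push_cast; constructor <;> linarith

theorem norm_integral_norm_affineInterp_sub_sq_le (hS : S ≠ 0)
    (hnode : ∀ s ≤ S, ‖y s - X (s / S)‖ ≤ ε) (hX : LipschitzOnWith M X (Icc 0 1)) :
    ‖∫ t in (0 : ℝ)..1, ‖affineInterp S y t - X t‖ ^ 2‖ ≤ (ε + M / S) ^ 2 := by
  have hbound : ∀ t ∈ uIoc (0 : ℝ) 1,
      ‖‖affineInterp S y t - X t‖ ^ 2‖ ≤ (ε + M / S) ^ 2 := by
    intro t ht
    rw [norm_pow, norm_norm]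
    gcongr
    exact norm_affineInterp_sub_le hS hnode hX (Ioc_subset_Icc_self (by simpa using ht))
  simpa using norm_integral_le_of_norm_le_const hbound

end Interpolation

theorem eulerIter_succ {E F : Type*} [NormedAddCommGroup E] [NormedSpace ℝ E]
    (f : E × F → E) (x₀ : E) (S : ℕ) (q : F) (s : ℕ) :
    eulerIter f x₀ S q (s + 1) =
      eulerIter f x₀ S q s + (1 / (S : ℝ)) • f (eulerIter f x₀ S q s, q) :=
  Function.iterate_succ_apply' _ _ _

section Euler

variable {E F : Type*} [NormedAddCommGroup E] [NormedSpace ℝ E] [NormedAddCommGroup F]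
  {f : E × F → E} {K M : ℝ≥0} {p q : F} {X : ℝ → E}

theorem norm_euler_step_sub_le (hf : LipschitzWith K f) {a b : ℝ} (hab : a ≤ b)
    (hX : ∀ t ∈ Icc a b, HasDerivWithinAt X (f (X t, p)) (Icc a b) t)
    (hXM : LipschitzOnWith M X (Icc a b)) (x : E) :
    ‖x + (b - a) • f (x, q) - X b‖ ≤
      ‖x - X a‖ + (b - a) * (K * (‖x - X a‖ + M * (b - a) + ‖q - p‖)) := by
  set C := (K : ℝ) * (‖x - X a‖ + M * (b - a) + ‖q - p‖)
  have hderiv : ∀ t ∈ Icc a b, HasDerivWithinAt (fun t => X t - t • f (x, q))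
      (f (X t, p) - f (x, q)) (Icc a b) t := fun t ht =>
    (hX t ht).sub (by simpa using (hasDerivWithinAt_id t _).smul_const (f (x, q)))
  have hbound : ∀ t ∈ Ico a b, ‖f (X t, p) - f (x, q)‖ ≤ C := by
    intro t ht
    have hXt : ‖X t - X a‖ ≤ M * (b - a) := by
      grw [hXM.norm_sub_le (Ico_subset_Icc_self ht) (left_mem_Icc.2 hab), Real.norm_eq_abs,
        abs_of_nonneg (sub_nonneg.2 ht.1), ht.2.le]
    calc ‖f (X t, p) - f (x, q)‖ ≤ K * ‖(X t, p) - (x, q)‖ := hf.norm_sub_le _ _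
      _ ≤ K * (‖X t - x‖ + ‖p - q‖) := by
        gcongr
        exact max_le_add_of_nonneg (norm_nonneg _) (norm_nonneg _)
      _ ≤ C := by
        have hXtx : ‖X t - x‖ ≤ ‖x - X a‖ + M * (b - a) := by
          grw [norm_sub_le_norm_sub_add_norm_sub _ (X a), hXt, norm_sub_rev (X a)]
          linarith
        grw [hXtx, norm_sub_rev p]
  have hmvt := norm_image_sub_le_of_norm_deriv_le_segment' hderiv hbound b (right_mem_Icc.2 hab)
  calc ‖x + (b - a) • f (x, q) - X b‖
      = ‖(x - X a) - ((X b - b • f (x, q)) - (X a - a • f (x, q)))‖ := by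
        rw [sub_smul]; congr 1; abel
    _ ≤ ‖x - X a‖ + C * (b - a) := (norm_sub_le _ _).trans (by gcongr)
    _ = _ := by ring

theorem norm_eulerIter_sub_le (hf : LipschitzWith K f) {x₀ : E} (hX0 : X 0 = x₀)
    (hX : ∀ t ∈ Icc (0 : ℝ) 1, HasDerivAt X (f (X t, p)) t)
    (hXM : LipschitzOnWith M X (Icc 0 1)) {S : ℕ} (hS : S ≠ 0) (q : F) {s : ℕ}
    (hs : s ≤ S) :
    ‖eulerIter f x₀ S q s - X (s / S)‖ ≤ K * (‖q - p‖ + M / S) * Real.exp K := by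
  have hSpos : (0 : ℝ) < S := by positivity
  set e : ℕ → ℝ := fun k => ‖eulerIter f x₀ S q k - X (k / S)‖
  set δ := ‖q - p‖ + M / S
  have he0 : e 0 = 0 := by simp [e, hX0, eulerIter]
  have hstep : ∀ k < S, e (k + 1) ≤ (1 + K / S) * e k + K / S * δ := by
    intro k hk
    have hsub : Icc ((k : ℝ) / S) ((k + 1 : ℕ) / S) ⊆ Icc 0 1 :=
      Icc_subset_Icc (by positivity) (div_le_one_of_le₀ (by exact_mod_cast hk) hSpos.le)
    have hlen : ((k + 1 : ℕ) : ℝ) / S - k / S = 1 / S := by push_cast; ring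
    have h := norm_euler_step_sub_le (q := q) hf
      (div_le_div_of_nonneg_right (by simp) hSpos.le)
      (fun t ht => (hX t (hsub ht)).hasDerivWithinAt) (hXM.mono hsub) (eulerIter f x₀ S q k)
    rw [hlen, ← eulerIter_succ] at h
    calc e (k + 1) ≤ e k + 1 / S * (K * (e k + M * (1 / S) + ‖q - p‖)) := h
      _ = _ := by ring
  -- the recurrence only holds up to `S`, so `e` is continued by `0` beyond `S`
  set u : ℕ → ℝ := fun k => if k ≤ S then e k else 0
  have hu : ∀ k ≥ 0, u (k + 1) ≤ (1 + K / S) * u k + K / S * δ := by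
    intro k _
    by_cases hk : k + 1 ≤ S
    · simpa [u, hk, (Nat.le_succ k).trans hk] using hstep k hk
    · have : 0 ≤ u k := by positivity
      simp only [u, hk, if_false]
      positivity
  have hgron := discrete_gronwall (u := u) (c := fun _ => K / S) (b := fun _ => K / S * δ)
    (by simp [u, he0]) hu (fun _ _ => by positivity) (fun _ _ => by positivity)
    (Nat.zero_le s)
  simp only [u, hs, zero_le, if_true, he0, zero_add, Finset.sum_const, Nat.card_Ico, tsub_zero,
    nsmul_eq_mul] at hgron
  have hsS : (s : ℝ) / S ≤ 1 := div_le_one_of_le₀ (by exact_mod_cast hs) hSpos.le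
  have hδ : 0 ≤ δ := by positivity
  calc e s ≤ s * (K / S * δ) * Real.exp (s * (K / S)) := hgron
    _ = (s / S) * (K * δ) * Real.exp (K * (s / S)) := by ring_nf
    _ ≤ 1 * (K * δ) * Real.exp (K * 1) := by gcongr
    _ = K * δ * Real.exp K := by rw [one_mul, mul_one]

end Euler

/-- Convergence of the affine interpolants of the explicit Euler trajectories
with converging parameters `p^S → p` to the continuous flow, both in
`L²((0,1))` and uniformly at the nodes. -/
theorem euler_interpolants_converge_to_flow
    (n d : ℕ)
    (f : EuclideanSpace ℝ (Fin n) × EuclideanSpace ℝ (Fin d) → EuclideanSpace ℝ (Fin n))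
    (hf : ContDiff ℝ 1 f) (hsupp : HasCompactSupport f)
    (pS : ℕ → EuclideanSpace ℝ (Fin d)) (p : EuclideanSpace ℝ (Fin d))
    (hp : Tendsto pS atTop (nhds p))
    (x₀ : EuclideanSpace ℝ (Fin n)) (X : ℝ → EuclideanSpace ℝ (Fin n))
    (hX0 : X 0 = x₀)
    (hX : ∀ t ∈ Icc (0:ℝ) 1, HasDerivAt X (f (X t, p)) t) :
    Tendsto
      (fun S : ℕ => ∫ t in (0:ℝ)..1,
        ‖affineInterp S (eulerIter f x₀ S (pS S)) t - X t‖ ^ 2)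
      atTop (nhds 0) ∧
    ∀ ε > (0:ℝ), ∃ S₀ : ℕ, ∀ S ≥ S₀, ∀ s ≤ S,
      ‖eulerIter f x₀ S (pS S) s - X ((s : ℝ) / S)‖ ≤ ε := by
  obtain ⟨K, hK⟩ := hf.lipschitzWith_of_hasCompactSupport hsupp one_ne_zero
  obtain ⟨C, hC⟩ := hf.continuous.bounded_above_of_compact_support hsupp
  set M : ℝ≥0 := ⟨max C 0, le_max_right _ _⟩
  have hXM : LipschitzOnWith M X (Icc 0 1) :=
    (convex_Icc 0 1).lipschitzOnWith_of_nnnorm_hasDerivWithin_le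
      (fun t ht => (hX t ht).hasDerivWithinAt)
      (fun t _ => by rw [← NNReal.coe_le_coe, coe_nnnorm]; exact (hC _).trans (le_max_left _ _))
  set err : ℕ → ℝ := fun S => K * (‖pS S - p‖ + M / S) * Real.exp K
  have hMS : Tendsto (fun S : ℕ => (M : ℝ) / S) atTop (𝓝 0) :=
    tendsto_const_div_atTop_nhds_zero_nat _
  have herr : Tendsto err atTop (𝓝 0) := by
    simpa using (((tendsto_iff_norm_sub_tendsto_zero.1 hp).add hMS).const_mul (K : ℝ)).mul_const
      (Real.exp K)
  have hnode : ∀ᶠ S in atTop,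
      S ≠ 0 ∧ ∀ s ≤ S, ‖eulerIter f x₀ S (pS S) s - X (s / S)‖ ≤ err S :=
    (eventually_ne_atTop 0).mono fun S hS =>
      ⟨hS, fun _ hs => norm_eulerIter_sub_le hK hX0 hX hXM hS _ hs⟩
  refine ⟨?_, fun ε hε => ?_⟩
  · refine squeeze_zero_norm' ?_ (by simpa using (herr.add hMS).pow 2)
    filter_upwards [hnode] with S ⟨hS, hSnode⟩
    exact norm_integral_norm_affineInterp_sub_sq_le hS hSnode hXM
  · obtain ⟨S₀, hS₀⟩ := eventually_atTop.1 (hnode.and (herr.eventually (ge_mem_nhds hε)))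
    exact ⟨S₀, fun S hS s hs => ((hS₀ S hS).1.2 s hs).trans (hS₀ S hS).2⟩
end
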